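/- Let B ⊂ ℝ² be the open unit ball, p > 1, 0 ≤ α ≤ β, κ = (β+2)/(α+2). If u_α ∈ C²(B) is a radial solution of -Δu = |x|^α |u|^{p-1}u in B with u = 0 on ∂B, then u_β(y) := κ^{2/(p-1)} u_α(|y|^{(β-α)/(α+2)} y) is a radial solution of -Δu = |y|^β |u|^{p-1}u in B with u = 0 on ∂B. Moreover u_β and u_α have the same number of nodal sets. -/

import Mathlib

/-- The transformation `T κ (y) = |y|^(κ-1) y` on `ℝ²` (with `T κ 0 = 0`). -/
noncomputable def T (κ : ℝ) (y : EuclideanSpace ℝ (Fin 2)) : EuclideanSpace ℝ (Fin 2) :=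
  (‖y‖ ^ (κ - 1) : ℝ) • y

/-- The Laplacian on `ℝ²` as the sum of the second directional derivatives. -/
noncomputable def lap (u : EuclideanSpace ℝ (Fin 2) → ℝ) (x : EuclideanSpace ℝ (Fin 2)) : ℝ :=
  ∑ i : Fin 2,
    fderiv ℝ (fun z => fderiv ℝ u z (EuclideanSpace.single i 1)) x (EuclideanSpace.single i 1)

/-- The nodal sets of `u` on the unit ball `B`: the connected components of
`{x ∈ B : u x ≠ 0}`. -/
def nodalSets (u : EuclideanSpace ℝ (Fin 2) → ℝ) : Set (Set (EuclideanSpace ℝ (Fin 2))) :=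
  {C | ∃ x ∈ {z : EuclideanSpace ℝ (Fin 2) | z ∈ Metric.ball 0 1 ∧ u z ≠ 0},
    C = connectedComponentIn {z : EuclideanSpace ℝ (Fin 2) | z ∈ Metric.ball 0 1 ∧ u z ≠ 0} x}

noncomputable abbrev E2 := EuclideanSpace ℝ (Fin 2)

open Filter Real

lemma hasFDerivAt_norm' (x : E2) (hx : x ≠ 0) :
    HasFDerivAt (fun z : E2 => ‖z‖) (‖x‖⁻¹ • innerSL ℝ x) x := by
  have h1 : HasFDerivAt (fun z : E2 => ‖z‖ ^ 2) (2 • innerSL ℝ x) x :=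
    (hasStrictFDerivAt_norm_sq x).hasFDerivAt
  have hx2 : (‖x‖ ^ 2 : ℝ) ≠ 0 := pow_ne_zero 2 (norm_ne_zero_iff.2 hx)
  have h2 := (Real.hasDerivAt_sqrt hx2).comp_hasFDerivAt x h1
  have he : ((fun t => √t) ∘ fun z : E2 => ‖z‖ ^ 2) = fun z : E2 => ‖z‖ := by
    funext z; simp [Function.comp, Real.sqrt_sq (norm_nonneg z)]
  rw [he] at h2
  refine h2.congr_fderiv ?_
  rw [Real.sqrt_sq (norm_nonneg x)]
  ext v
  simp only [ContinuousLinearMap.smul_apply, smul_eq_mul, two_smul,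
    ContinuousLinearMap.add_apply]
  field_simp
  ring

lemma lap_radial {u : E2 → ℝ} {x : E2} (hx : x ≠ 0) {W W1 : ℝ → ℝ} {a : ℝ}
    (hu : ∀ᶠ z in nhds x, u z = W ‖z‖)
    (hW1 : ∀ᶠ s in nhds ‖x‖, HasDerivAt W (W1 s) s)
    (hW2 : HasDerivAt W1 a ‖x‖) :
    lap u x = a + W1 ‖x‖ / ‖x‖ := by
  set r := ‖x‖ with hr
  have hr0 : 0 < r := norm_pos_iff.2 hx
  -- eventually, u has a specific fderiv
  have hnorm : Filter.Tendsto (fun z : E2 => ‖z‖) (nhds x) (nhds r) :=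
    continuous_norm.continuousAt
  have hev : ∀ᶠ z in nhds x,
      HasFDerivAt u ((W1 ‖z‖ * ‖z‖⁻¹) • innerSL ℝ z) z := by
    filter_upwards [eventually_eventually_nhds.2 hu, hnorm.eventually hW1,
      eventually_ne_nhds hx] with z hz hz1 hz0
    have hn := hasFDerivAt_norm' z hz0
    have := hz1.comp_hasFDerivAt z hn
    have h2 : HasFDerivAt u (W1 ‖z‖ • ‖z‖⁻¹ • innerSL ℝ z) z :=
      this.congr_of_eventuallyEq (by filter_upwards [hz] with w hw using hw)
    convert h2 using 1
    rw [smul_smul]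
  -- the first partials
  have hfd : ∀ i : Fin 2, (fun z => fderiv ℝ u z (EuclideanSpace.single i 1))
      =ᶠ[nhds x] fun z => (W1 ‖z‖ * ‖z‖⁻¹) * z i := by
    intro i
    filter_upwards [hev] with z hz
    rw [hz.fderiv]
    simp only [ContinuousLinearMap.smul_apply, innerSL_apply_apply, smul_eq_mul,
      EuclideanSpace.inner_single_right, conj_trivial, one_mul]
  -- derivative of the coefficient function
  have hφ : HasFDerivAt (fun z : E2 => W1 ‖z‖ * ‖z‖⁻¹)
      (((a * r⁻¹ + W1 r * (-(r ^ 2)⁻¹))) • (r⁻¹ • innerSL ℝ x)) x := by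
    have h1 : HasDerivAt (fun s : ℝ => W1 s * s⁻¹) (a * r⁻¹ + W1 r * (-(r ^ 2)⁻¹)) r := by
      have := hW2.mul (hasDerivAt_inv hr0.ne')
      exact this
    exact h1.comp_hasFDerivAt x (hasFDerivAt_norm' x hx)
  have hsum : ∑ i : Fin 2, (x i) ^ 2 = r ^ 2 := by
    rw [hr, EuclideanSpace.norm_eq, Real.sq_sqrt]
    · simp [Real.norm_eq_abs, sq_abs]
    · positivity
  have key : ∀ i : Fin 2,
      fderiv ℝ (fun z => fderiv ℝ u z (EuclideanSpace.single i 1)) x (EuclideanSpace.single i 1)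
      = (W1 r * r⁻¹) + (a * r⁻¹ + W1 r * (-(r ^ 2)⁻¹)) * (r⁻¹ * (x i) ^ 2) := by
    intro i
    have hgi : HasFDerivAt (fun z : E2 => (W1 ‖z‖ * ‖z‖⁻¹) * z i)
        ((W1 r * r⁻¹) • (EuclideanSpace.proj i : E2 →L[ℝ] ℝ)
          + (x i) • (((a * r⁻¹ + W1 r * (-(r ^ 2)⁻¹))) • (r⁻¹ • innerSL ℝ x))) x := by
      have hpi : HasFDerivAt (fun z : E2 => z i)
          ((EuclideanSpace.proj i : E2 →L[ℝ] ℝ)) x :=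
        (EuclideanSpace.proj i : E2 →L[ℝ] ℝ).hasFDerivAt
      exact hφ.mul hpi
    rw [(hfd i).fderiv_eq, hgi.fderiv]
    simp only [ContinuousLinearMap.add_apply, ContinuousLinearMap.smul_apply, smul_eq_mul,
      innerSL_apply_apply, EuclideanSpace.inner_single_right, map_one, RingHom.id_apply]
    have hps : (EuclideanSpace.proj i : E2 →L[ℝ] ℝ) (EuclideanSpace.single i 1) = 1 := by
      simp [EuclideanSpace.single_apply]
    have h2 : (inner ℝ x (EuclideanSpace.single i (1:ℝ)) : ℝ) = x i := by
      rw [EuclideanSpace.inner_single_right]; simp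
    simp only [conj_trivial]
    rw [hps]
    ring
  rw [lap, Fin.sum_univ_two, key 0, key 1]
  have hx2 : (x 0) ^ 2 + (x 1) ^ 2 = r ^ 2 := by
    have := hsum; rwa [Fin.sum_univ_two] at this
  have : W1 r * r⁻¹ + (a * r⁻¹ + W1 r * (-(r ^ 2)⁻¹)) * (r⁻¹ * (x 0) ^ 2)
      + (W1 r * r⁻¹ + (a * r⁻¹ + W1 r * (-(r ^ 2)⁻¹)) * (r⁻¹ * (x 1) ^ 2))
      = 2 * (W1 r * r⁻¹) + (a * r⁻¹ + W1 r * (-(r ^ 2)⁻¹)) * (r⁻¹ * ((x 0) ^ 2 + (x 1) ^ 2)) := by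
    ring
  rw [this, hx2]
  field_simp
  ring

lemma norm_Tk (c : ℝ) (hc : 0 < c) (y : E2) : ‖(‖y‖ ^ (c - 1) : ℝ) • y‖ = ‖y‖ ^ c := by
  rcases eq_or_ne y 0 with rfl | hy
  · simp [Real.zero_rpow hc.ne']
  · have h0 : (0:ℝ) < ‖y‖ := norm_pos_iff.2 hy
    rw [norm_smul, Real.norm_eq_abs, abs_of_nonneg (Real.rpow_nonneg (norm_nonneg y) _),
      ← Real.rpow_add_one h0.ne' (c - 1), sub_add_cancel]

lemma contTk (c : ℝ) (hc : 0 < c) : Continuous (fun y : E2 => (‖y‖ ^ (c - 1) : ℝ) • y) := by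
  rw [continuous_iff_continuousAt]
  intro x
  rcases eq_or_ne x 0 with rfl | hx
  · have h0 : (‖(0:E2)‖ ^ (c - 1) : ℝ) • (0:E2) = 0 := by simp
    rw [ContinuousAt, h0, tendsto_zero_iff_norm_tendsto_zero]
    have he : (fun y : E2 => ‖(‖y‖ ^ (c - 1) : ℝ) • y‖) = fun y : E2 => ‖y‖ ^ c := by
      funext y; exact norm_Tk c hc y
    rw [he]
    have h1 : ContinuousAt (fun t : ℝ => t ^ c) ‖(0:E2)‖ := by
      rw [norm_zero]; exact Real.continuousAt_rpow_const 0 c (Or.inr hc.le)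
    have hn : ContinuousAt (fun y : E2 => ‖y‖) (0 : E2) := continuous_norm.continuousAt
    have h2 : Tendsto (fun y : E2 => ‖y‖ ^ c) (nhds 0) (nhds (‖(0:E2)‖ ^ c)) := h1.comp hn
    simpa [Real.zero_rpow hc.ne'] using h2
  · exact (((Real.continuousAt_rpow_const ‖x‖ (c-1)
      (Or.inl (norm_ne_zero_iff.2 hx))).comp continuous_norm.continuousAt).smul
      continuousAt_id)

lemma Tk_Tk (c : ℝ) (hc : 0 < c) (y : E2) :
    (‖((‖y‖ ^ (c - 1) : ℝ) • y)‖ ^ (c⁻¹ - 1) : ℝ) • ((‖y‖ ^ (c - 1) : ℝ) • y) = y := by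
  rcases eq_or_ne y 0 with rfl | hy
  · simp
  · have h0 : (0:ℝ) < ‖y‖ := norm_pos_iff.2 hy
    rw [norm_Tk c hc, smul_smul, ← Real.rpow_mul (norm_nonneg y), ← Real.rpow_add h0,
      show c * (c⁻¹ - 1) + (c - 1) = 0 by field_simp; ring, Real.rpow_zero, one_smul]

/-- The homeomorphism `y ↦ ‖y‖^(c-1) • y` of the plane, for `c > 0`. -/
noncomputable def TkHomeo (c : ℝ) (hc : 0 < c) : E2 ≃ₜ E2 where
  toFun := fun y => (‖y‖ ^ (c - 1) : ℝ) • y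
  invFun := fun y => (‖y‖ ^ (c⁻¹ - 1) : ℝ) • y
  left_inv := fun y => Tk_Tk c hc y
  right_inv := fun y => by
    have := Tk_Tk c⁻¹ (inv_pos.2 hc) y
    rwa [inv_inv] at this
  continuous_toFun := contTk c hc
  continuous_invFun := contTk c⁻¹ (inv_pos.2 hc)

lemma ncard_components (S S' : Set E2) (e : E2 ≃ₜ E2) (hS : S' = ⇑e ⁻¹' S) :
    {C | ∃ x ∈ S', C = connectedComponentIn S' x}.ncard
      = {C | ∃ x ∈ S, C = connectedComponentIn S x}.ncard := by
  have hpre : ∀ x ∈ S, ⇑e ⁻¹' connectedComponentIn S x = connectedComponentIn S' (e.symm x) := by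
    intro x hx
    have h1 := e.symm.image_connectedComponentIn (s := S) (x := x) hx
    have h2 : ⇑e.symm '' connectedComponentIn S x = ⇑e ⁻¹' connectedComponentIn S x := by
      rw [Homeomorph.image_symm]
    have h3 : ⇑e.symm '' S = ⇑e ⁻¹' S := by rw [Homeomorph.image_symm]
    rw [h2, h3] at h1
    rw [h1, hS]
  have himg : {C | ∃ x ∈ S', C = connectedComponentIn S' x}
      = (fun C => ⇑e ⁻¹' C) '' {C | ∃ x ∈ S, C = connectedComponentIn S x} := by
    ext C
    constructor
    · rintro ⟨x, hx, rfl⟩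
      refine ⟨connectedComponentIn S (e x), ⟨e x, by rwa [hS] at hx, rfl⟩, ?_⟩
      show ⇑e ⁻¹' connectedComponentIn S (e x) = _
      rw [hpre (e x) (by rwa [hS] at hx)]
      simp
    · rintro ⟨D, ⟨x, hx, rfl⟩, rfl⟩
      refine ⟨e.symm x, ?_, hpre x hx⟩
      rw [hS]
      simpa using hx
  rw [himg]
  exact Set.ncard_image_of_injective _ (Set.preimage_injective.2 e.surjective)

/-- If `u_α` is a radial solution of the Hénon problem `(P_α)` in the unit ball, then
`u_β(y) = κ^(2/(p-1)) u_α(|y|^((β-α)/(α+2)) y)`, with `κ = (β+2)/(α+2)`, is a radial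
solution of `(P_β)` with the same number of nodal sets. -/
theorem stmt7 (p : ℝ) (hp : 1 < p) (α β : ℝ) (hα : 0 ≤ α) (hαβ : α ≤ β)
    (κ : ℝ) (hκ : κ = (β + 2) / (α + 2))
    (uα : EuclideanSpace ℝ (Fin 2) → ℝ)
    (hreg : ContDiffOn ℝ 2 uα (Metric.ball 0 1))
    (hrad : ∃ U : ℝ → ℝ, ∀ x ∈ Metric.ball (0 : EuclideanSpace ℝ (Fin 2)) 1, uα x = U ‖x‖)
    (hpde : ∀ x ∈ Metric.ball (0 : EuclideanSpace ℝ (Fin 2)) 1,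
      -lap uα x = ‖x‖ ^ α * |uα x| ^ (p - 1) * uα x)
    (hbd : ∀ x : EuclideanSpace ℝ (Fin 2), ‖x‖ = 1 → uα x = 0)
    (uβ : EuclideanSpace ℝ (Fin 2) → ℝ)
    (huβ : ∀ y : EuclideanSpace ℝ (Fin 2),
      uβ y = κ ^ (2 / (p - 1)) * uα ((‖y‖ ^ ((β - α) / (α + 2)) : ℝ) • y)) :
    (∃ V : ℝ → ℝ, ∀ y ∈ Metric.ball (0 : EuclideanSpace ℝ (Fin 2)) 1, uβ y = V ‖y‖) ∧
    (∀ y ∈ Metric.ball (0 : EuclideanSpace ℝ (Fin 2)) 1,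
      -lap uβ y = ‖y‖ ^ β * |uβ y| ^ (p - 1) * uβ y) ∧
    (∀ y : EuclideanSpace ℝ (Fin 2), ‖y‖ = 1 → uβ y = 0) ∧
    (nodalSets uβ).ncard = (nodalSets uα).ncard := by
  have ha2 : (0:ℝ) < α + 2 := by linarith
  have hβ2 : (0:ℝ) < β + 2 := by linarith
  have hκ0 : 0 < κ := by rw [hκ]; positivity
  have hκβ : κ * (α + 2) = β + 2 := by rw [hκ]; field_simp
  have hp1 : p - 1 ≠ 0 := sub_ne_zero_of_ne hp.ne'
  rcases eq_or_lt_of_le hαβ with heq | hlt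
  · -- trivial case  α = β,  uβ = uα
    subst heq
    have hκ1 : κ = 1 := by rw [hκ, div_self hβ2.ne']
    have huu : uβ = uα := by
      funext y
      rw [huβ y, hκ1]
      simp
    rw [huu]
    exact ⟨hrad, hpde, hbd, rfl⟩
  · -- main case  α < β
    obtain ⟨U, hU⟩ := hrad
    have hκ1 : 1 < κ := by rw [hκ, lt_div_iff₀ ha2]; linarith
    have hβ0 : 0 < β := lt_of_le_of_lt hα hlt
    set e₀ : E2 := EuclideanSpace.single 0 1 with he₀def
    have he₀ : ‖e₀‖ = 1 := by rw [he₀def, EuclideanSpace.norm_single, norm_one]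
    set U₀ : ℝ → ℝ := fun t => uα (t • e₀) with hU₀def
    have hmap : ∀ t ∈ Set.Ioo (-1:ℝ) 1, t • e₀ ∈ Metric.ball (0:E2) 1 := by
      intro t ht
      rw [mem_ball_zero_iff, norm_smul, he₀, mul_one, Real.norm_eq_abs, abs_lt]
      exact ⟨ht.1, ht.2⟩
    have hU0 : ∀ x ∈ Metric.ball (0:E2) 1, uα x = U₀ ‖x‖ := by
      intro x hx
      have hnx : ‖x‖ ∈ Set.Ioo (-1:ℝ) 1 :=
        ⟨lt_of_lt_of_le neg_one_lt_zero (norm_nonneg x), mem_ball_zero_iff.1 hx⟩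
      have h1 : ‖x‖ • e₀ ∈ Metric.ball (0:E2) 1 := hmap _ hnx
      have h2 : ‖‖x‖ • e₀‖ = ‖x‖ := by
        rw [norm_smul, he₀, mul_one, Real.norm_eq_abs, abs_of_nonneg (norm_nonneg x)]
      rw [hU x hx, hU₀def]
      simp only
      rw [hU _ h1, h2]
    have hUc : ContDiffOn ℝ 2 U₀ (Set.Ioo (-1) 1) := by
      apply hreg.comp ((contDiff_id.smul contDiff_const).contDiffOn)
      intro t ht
      exact hmap t ht
    set U1 : ℝ → ℝ := deriv U₀ with hU1def
    set U2 : ℝ → ℝ := deriv U1 with hU2def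
    have hd1 : ∀ t ∈ Set.Ioo (-1:ℝ) 1, HasDerivAt U₀ (U1 t) t := by
      intro t ht
      exact ((hUc.differentiableOn (by norm_num)).differentiableAt
        (isOpen_Ioo.mem_nhds ht)).hasDerivAt
    have hUc1 : ContDiffOn ℝ 1 U1 (Set.Ioo (-1) 1) :=
      hUc.deriv_of_isOpen isOpen_Ioo (by norm_num)
    have hd2 : ∀ t ∈ Set.Ioo (-1:ℝ) 1, HasDerivAt U1 (U2 t) t := by
      intro t ht
      exact ((hUc1.differentiableOn (by norm_num)).differentiableAt
        (isOpen_Ioo.mem_nhds ht)).hasDerivAt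
    have hODE : ∀ t ∈ Set.Ioo (0:ℝ) 1, U2 t + U1 t / t = -(t ^ α * |U₀ t| ^ (p - 1) * U₀ t) := by
      intro t ht
      have htI : t ∈ Set.Ioo (-1:ℝ) 1 := ⟨by linarith [ht.1], ht.2⟩
      have hxball : t • e₀ ∈ Metric.ball (0:E2) 1 := hmap t htI
      have hxn : ‖t • e₀‖ = t := by
        rw [norm_smul, he₀, mul_one, Real.norm_eq_abs, abs_of_pos ht.1]
      have hx0 : t • e₀ ≠ 0 := by
        intro h
        rw [h, norm_zero] at hxn
        exact ht.1.ne hxn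
      have h1 : ∀ᶠ s in nhds ‖t • e₀‖, HasDerivAt U₀ (U1 s) s := by
        rw [hxn]
        filter_upwards [isOpen_Ioo.eventually_mem htI] with s hs using hd1 s hs
      have h2 : HasDerivAt U1 (U2 t) ‖t • e₀‖ := by rw [hxn]; exact hd2 t htI
      have hu : ∀ᶠ z in nhds (t • e₀), uα z = U₀ ‖z‖ := by
        filter_upwards [Metric.isOpen_ball.eventually_mem hxball] with z hz using hU0 z hz
      have hlap := lap_radial hx0 hu h1 h2
      have hpde' := hpde _ hxball
      rw [hlap, hxn] at hpde'
      have hux : uα (t • e₀) = U₀ t := rfl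
      rw [hux] at hpde'
      linarith [hpde']
    set c : ℝ := κ ^ (2/(p-1)) with hcdef
    have hc0 : 0 < c := Real.rpow_pos_of_pos hκ0 _
    have hkm1 : (β - α)/(α+2) = κ - 1 := by rw [hκ]; field_simp; ring
    have huβ' : ∀ y, uβ y = c * uα ((‖y‖ ^ (κ - 1) : ℝ) • y) := fun y => by
      rw [huβ y, hkm1]
    set W : ℝ → ℝ := fun t => c * U₀ (t ^ κ) with hWdef
    set W1 : ℝ → ℝ := fun t => c * (U1 (t ^ κ) * (κ * t ^ (κ - 1))) with hW1def
    have hsm : ∀ t : ℝ, t ∈ Set.Ioo (0:ℝ) 1 → t ^ κ ∈ Set.Ioo (0:ℝ) 1 := fun t ht =>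
      ⟨Real.rpow_pos_of_pos ht.1 κ, Real.rpow_lt_one ht.1.le ht.2 hκ0⟩
    have hWd : ∀ t ∈ Set.Ioo (0:ℝ) 1, HasDerivAt W (W1 t) t := by
      intro t ht
      have hsI : t ^ κ ∈ Set.Ioo (-1:ℝ) 1 :=
        ⟨by linarith [(hsm t ht).1], (hsm t ht).2⟩
      have h1 : HasDerivAt (fun x : ℝ => x ^ κ) (κ * t ^ (κ-1)) t :=
        Real.hasDerivAt_rpow_const (Or.inl ht.1.ne')
      exact ((hd1 _ hsI).comp t h1).const_mul c
    have huW : ∀ z ∈ Metric.ball (0:E2) 1, uβ z = W ‖z‖ := by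
      intro z hz
      rw [huβ' z]
      have hTz : (‖z‖ ^ (κ - 1) : ℝ) • z ∈ Metric.ball (0:E2) 1 := by
        rw [mem_ball_zero_iff, norm_Tk κ hκ0]
        exact Real.rpow_lt_one (norm_nonneg z) (mem_ball_zero_iff.1 hz) hκ0
      rw [hU0 _ hTz, norm_Tk κ hκ0]
    have hfduβ : ∀ z ∈ Metric.ball (0:E2) 1, z ≠ 0 →
        HasFDerivAt uβ ((W1 ‖z‖ * ‖z‖⁻¹) • innerSL ℝ z) z := by
      intro z hz hz0
      have hn := hasFDerivAt_norm' z hz0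
      have h1 : HasDerivAt W (W1 ‖z‖) ‖z‖ :=
        hWd _ ⟨norm_pos_iff.2 hz0, mem_ball_zero_iff.1 hz⟩
      have h2 := h1.comp_hasFDerivAt z hn
      have h3 : uβ =ᶠ[nhds z] fun w => W ‖w‖ := by
        filter_upwards [Metric.isOpen_ball.eventually_mem hz] with w hw using huW w hw
      have h4 := h2.congr_of_eventuallyEq h3
      refine h4.congr_fderiv ?_
      rw [smul_smul]
    refine ⟨⟨W, fun y hy => huW y hy⟩, ?_, ?_, ?_⟩
    · -- the PDE
      intro y hy
      rcases eq_or_ne y 0 with rfl | hy0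
      · -- at the origin
        have hrhs : ‖(0:E2)‖ ^ β * |uβ 0| ^ (p-1) * uβ 0 = 0 := by
          rw [norm_zero, Real.zero_rpow hβ0.ne', zero_mul, zero_mul]
        rw [hrhs, neg_eq_zero]
        have h0I : (0:ℝ) ∈ Set.Ioo (-1:ℝ) 1 := by norm_num
        have hU1c : ContDiffAt ℝ 1 U1 0 := hUc1.contDiffAt (isOpen_Ioo.mem_nhds h0I)
        obtain ⟨K, t, ht, hKt⟩ := hU1c.exists_lipschitzOnWith
        have hU0c : ContDiffAt ℝ 1 U₀ 0 :=
          (hUc.contDiffAt (isOpen_Ioo.mem_nhds h0I)).of_le (by norm_num)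
        obtain ⟨K₀, t₀, ht₀, hKt₀⟩ := hU0c.exists_lipschitzOnWith
        -- evenness of U₀ gives U1 0 = 0
        have heven : (fun s => U₀ (-s)) =ᶠ[nhds (0:ℝ)] U₀ := by
          filter_upwards [isOpen_Ioo.eventually_mem h0I] with s hs
          have hs' : -s ∈ Set.Ioo (-1:ℝ) 1 := ⟨by linarith [hs.2], by linarith [hs.1]⟩
          show uα ((-s) • e₀) = uα (s • e₀)
          rw [hU _ (hmap _ hs'), hU _ (hmap _ hs)]
          congr 1
          rw [norm_smul, norm_smul, Real.norm_eq_abs, Real.norm_eq_abs, abs_neg]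
        have hU10 : U1 0 = 0 := by
          have hd : HasDerivAt U₀ (U1 0) 0 := hd1 0 h0I
          have hd' : HasDerivAt U₀ (U1 0) (-0 : ℝ) := by rwa [neg_zero]
          have hdneg : HasDerivAt (fun s : ℝ => U₀ (-s)) (U1 0 * (-1)) 0 :=
            hd'.comp 0 (hasDerivAt_neg 0)
          have hdeq : HasDerivAt U₀ (U1 0 * (-1)) 0 := hdneg.congr_of_eventuallyEq heven.symm
          have := hdeq.unique hd
          linarith
        have hU1b : ∀ s ∈ t, |U1 s| ≤ (K:ℝ) * |s| := by
          intro s hs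
          have h0t : (0:ℝ) ∈ t := mem_of_mem_nhds ht
          have h2 := hKt.dist_le_mul s hs 0 h0t
          rw [Real.dist_eq, Real.dist_eq, hU10, sub_zero, sub_zero] at h2
          exact h2
        have hU0b : ∀ s ∈ t₀, |U₀ s - U₀ 0| ≤ (K₀:ℝ) * |s| := by
          intro s hs
          have h0t : (0:ℝ) ∈ t₀ := mem_of_mem_nhds ht₀
          have h2 := hKt₀.dist_le_mul s hs 0 h0t
          rwa [Real.dist_eq, Real.dist_eq, sub_zero] at h2
        have h0ball : (0:E2) ∈ Metric.ball (0:E2) 1 := by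
          rw [mem_ball_zero_iff, norm_zero]; norm_num
        have huβ0 : uβ 0 = c * U₀ 0 := by
          rw [huW 0 h0ball]
          show c * U₀ (‖(0:E2)‖ ^ κ) = c * U₀ 0
          rw [norm_zero, Real.zero_rpow hκ0.ne']
        -- pullbacks of neighborhoods
        have hTs : Filter.Tendsto (fun s : ℝ => s ^ κ) (nhds 0) (nhds 0) := by
          have h1 := Real.continuousAt_rpow_const 0 κ (Or.inr hκ0.le)
          simpa [ContinuousAt, Real.zero_rpow hκ0.ne'] using h1
        have hTn : Filter.Tendsto (fun z : E2 => ‖z‖) (nhds 0) (nhds 0) := by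
          have := (continuous_norm (E := E2)).tendsto 0
          simpa using this
        have hT : Filter.Tendsto (fun z : E2 => ‖z‖ ^ κ) (nhds 0) (nhds 0) := hTs.comp hTn
        have hTp : ∀ q : ℝ, 0 < q → Filter.Tendsto (fun z : E2 => ‖z‖ ^ q) (nhds 0) (nhds 0) := by
          intro q hq
          have h1 := Real.continuousAt_rpow_const 0 q (Or.inr hq.le)
          have h2 : Filter.Tendsto (fun s : ℝ => s ^ q) (nhds 0) (nhds 0) := by
            simpa [ContinuousAt, Real.zero_rpow hq.ne'] using h1
          exact h2.comp hTn
        -- uβ is differentiable at 0 with derivative 0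
        have hfd0 : HasFDerivAt uβ (0 : E2 →L[ℝ] ℝ) 0 := by
          rw [hasFDerivAt_iff_isLittleO_nhds_zero]
          rw [Asymptotics.isLittleO_iff]
          intro ε hε
          have hev1 : ∀ᶠ z : E2 in nhds 0, ‖z‖ ^ κ ∈ t₀ := hT ht₀
          have hev2 : ∀ᶠ z : E2 in nhds 0, z ∈ Metric.ball (0:E2) 1 :=
            Metric.isOpen_ball.eventually_mem h0ball
          have hev3 : ∀ᶠ z : E2 in nhds 0, c * (K₀:ℝ) * ‖z‖ ^ (κ - 1) < ε := by
            have h4 : Filter.Tendsto (fun z : E2 => c * (K₀:ℝ) * ‖z‖ ^ (κ - 1))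
                (nhds 0) (nhds (c * (K₀:ℝ) * 0)) :=
              (hTp (κ - 1) (by linarith)).const_mul _
            rw [mul_zero] at h4
            exact h4.eventually_lt_const hε
          filter_upwards [hev1, hev2, hev3] with z h1 h2 h3
          simp only [zero_add, ContinuousLinearMap.zero_apply, sub_zero]
          rcases eq_or_ne z 0 with rfl | hz0
          · simp
          · have hzn : 0 < ‖z‖ := norm_pos_iff.2 hz0
            have e1 : uβ z - uβ 0 = c * (U₀ (‖z‖ ^ κ) - U₀ 0) := by
              rw [huW z h2, huβ0]
              show c * U₀ (‖z‖ ^ κ) - c * U₀ 0 = _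
              ring
            rw [Real.norm_eq_abs, e1, abs_mul, abs_of_pos hc0]
            have e2 : |U₀ (‖z‖ ^ κ) - U₀ 0| ≤ (K₀:ℝ) * ‖z‖ ^ κ := by
              have := hU0b _ h1
              rwa [abs_of_nonneg (Real.rpow_nonneg (norm_nonneg z) κ)] at this
            have e3 : ‖z‖ ^ κ = ‖z‖ ^ (κ - 1) * ‖z‖ := by
              rw [← Real.rpow_add_one hzn.ne' (κ - 1), sub_add_cancel]
            have e4 : (0:ℝ) ≤ ‖z‖ ^ (κ - 1) := Real.rpow_nonneg (norm_nonneg z) _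
            have h3' : c * ((K₀:ℝ) * ‖z‖ ^ κ) ≤ ε * ‖z‖ := by
              rw [e3]
              calc c * ((K₀:ℝ) * (‖z‖ ^ (κ - 1) * ‖z‖))
                  = (c * (K₀:ℝ) * ‖z‖ ^ (κ - 1)) * ‖z‖ := by ring
                _ ≤ ε * ‖z‖ := by
                    apply mul_le_mul_of_nonneg_right h3.le (norm_nonneg z)
            calc c * |U₀ (‖z‖ ^ κ) - U₀ 0| ≤ c * ((K₀:ℝ) * ‖z‖ ^ κ) := by
                  apply mul_le_mul_of_nonneg_left e2 hc0.le
              _ ≤ ε * ‖z‖ := h3'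
        have hg0 : fderiv ℝ uβ 0 = 0 := hfd0.fderiv
        -- each second partial derivative at the origin vanishes
        have hgi : ∀ i : Fin 2, HasFDerivAt
            (fun z : E2 => fderiv ℝ uβ z (EuclideanSpace.single i 1)) (0 : E2 →L[ℝ] ℝ) 0 := by
          intro i
          rw [hasFDerivAt_iff_isLittleO_nhds_zero]
          rw [Asymptotics.isLittleO_iff]
          intro ε hε
          have hev1 : ∀ᶠ z : E2 in nhds 0, ‖z‖ ^ κ ∈ t := hT ht
          have hev2 : ∀ᶠ z : E2 in nhds 0, z ∈ Metric.ball (0:E2) 1 :=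
            Metric.isOpen_ball.eventually_mem h0ball
          have hev3 : ∀ᶠ z : E2 in nhds 0, c * (K:ℝ) * κ * ‖z‖ ^ (κ + (κ - 1) - 1) < ε := by
            have h4 : Filter.Tendsto (fun z : E2 => c * (K:ℝ) * κ * ‖z‖ ^ (κ + (κ - 1) - 1))
                (nhds 0) (nhds (c * (K:ℝ) * κ * 0)) :=
              (hTp (κ + (κ - 1) - 1) (by linarith)).const_mul _
            rw [mul_zero] at h4
            exact h4.eventually_lt_const hε
          filter_upwards [hev1, hev2, hev3] with z h1 h2 h3
          simp only [zero_add, ContinuousLinearMap.zero_apply, sub_zero, hg0]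
          rcases eq_or_ne z 0 with rfl | hz0
          · simp [hg0]
          · have hzn : 0 < ‖z‖ := norm_pos_iff.2 hz0
            have hfz := (hfduβ z h2 hz0).fderiv
            rw [hfz]
            have hval : ((W1 ‖z‖ * ‖z‖⁻¹) • innerSL ℝ z) (EuclideanSpace.single i 1)
                = (W1 ‖z‖ * ‖z‖⁻¹) * (inner ℝ z (EuclideanSpace.single i (1:ℝ))) := rfl
            rw [hval]
            have hinner : |(inner ℝ z (EuclideanSpace.single i (1:ℝ)) : ℝ)| ≤ ‖z‖ := by
              have h5 := abs_real_inner_le_norm z (EuclideanSpace.single i (1:ℝ))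
              rwa [EuclideanSpace.norm_single, norm_one, mul_one] at h5
            have hW1b : |W1 ‖z‖| ≤ c * (K:ℝ) * κ * (‖z‖ ^ κ * ‖z‖ ^ (κ - 1)) := by
              have e5 : |W1 ‖z‖| = c * |U1 (‖z‖ ^ κ)| * (κ * ‖z‖ ^ (κ - 1)) := by
                show |c * (U1 (‖z‖ ^ κ) * (κ * ‖z‖ ^ (κ - 1)))| = _
                rw [abs_mul, abs_mul, abs_mul, abs_of_pos hc0, abs_of_pos hκ0,
                  abs_of_nonneg (Real.rpow_nonneg (norm_nonneg z) _)]
                ring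
              rw [e5]
              have e6 : |U1 (‖z‖ ^ κ)| ≤ (K:ℝ) * ‖z‖ ^ κ := by
                have := hU1b _ h1
                rwa [abs_of_nonneg (Real.rpow_nonneg (norm_nonneg z) κ)] at this
              have e7 : (0:ℝ) ≤ κ * ‖z‖ ^ (κ - 1) :=
                mul_nonneg hκ0.le (Real.rpow_nonneg (norm_nonneg z) _)
              calc c * |U1 (‖z‖ ^ κ)| * (κ * ‖z‖ ^ (κ - 1))
                  ≤ c * ((K:ℝ) * ‖z‖ ^ κ) * (κ * ‖z‖ ^ (κ - 1)) := by
                    apply mul_le_mul_of_nonneg_right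
                      (mul_le_mul_of_nonneg_left e6 hc0.le) e7
                _ = c * (K:ℝ) * κ * (‖z‖ ^ κ * ‖z‖ ^ (κ - 1)) := by ring
            have e8 : ‖z‖ ^ κ * ‖z‖ ^ (κ - 1) = ‖z‖ ^ (κ + (κ - 1) - 1) * ‖z‖ := by
              rw [← Real.rpow_add hzn, ← Real.rpow_add_one hzn.ne' (κ + (κ - 1) - 1)]
              congr 1
              ring
            rw [Real.norm_eq_abs, abs_mul, abs_mul, abs_inv, abs_of_pos hzn]
            calc |W1 ‖z‖| * ‖z‖⁻¹ * |(inner ℝ z (EuclideanSpace.single i (1:ℝ)) : ℝ)|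
                ≤ |W1 ‖z‖| * ‖z‖⁻¹ * ‖z‖ := by
                  apply mul_le_mul_of_nonneg_left hinner
                  positivity
              _ = |W1 ‖z‖| := by field_simp
              _ ≤ c * (K:ℝ) * κ * (‖z‖ ^ κ * ‖z‖ ^ (κ - 1)) := hW1b
              _ = (c * (K:ℝ) * κ * ‖z‖ ^ (κ + (κ - 1) - 1)) * ‖z‖ := by rw [e8]; ring
              _ ≤ ε * ‖z‖ := mul_le_mul_of_nonneg_right h3.le (norm_nonneg z)
        show lap uβ 0 = 0
        rw [lap, Fin.sum_univ_two, (hgi 0).fderiv, (hgi 1).fderiv]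
        simp

      · -- away from the origin
        have hy0' : 0 < ‖y‖ := norm_pos_iff.2 hy0
        have hy1 : ‖y‖ < 1 := mem_ball_zero_iff.1 hy
        have hrI : ‖y‖ ∈ Set.Ioo (0:ℝ) 1 := ⟨hy0', hy1⟩
        have hsI : ‖y‖ ^ κ ∈ Set.Ioo (0:ℝ) 1 := hsm _ hrI
        have hsI' : ‖y‖ ^ κ ∈ Set.Ioo (-1:ℝ) 1 := ⟨by linarith [hsI.1], hsI.2⟩
        have hA : HasDerivAt (fun t:ℝ => U1 (t ^ κ)) (U2 (‖y‖^κ) * (κ * ‖y‖ ^ (κ-1))) ‖y‖ :=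
          (hd2 _ hsI').comp (h := fun t : ℝ => t ^ κ) ‖y‖ (Real.hasDerivAt_rpow_const (Or.inl hrI.1.ne'))
        have hB : HasDerivAt (fun t:ℝ => κ * t ^ (κ-1)) (κ * ((κ-1) * ‖y‖ ^ (κ-1-1))) ‖y‖ :=
          (Real.hasDerivAt_rpow_const (Or.inl hrI.1.ne')).const_mul κ
        have hW2 : HasDerivAt W1
            (c * ((U2 (‖y‖^κ) * (κ * ‖y‖^(κ-1))) * (κ * ‖y‖^(κ-1))
              + U1 (‖y‖^κ) * (κ * ((κ-1) * ‖y‖^(κ-1-1))))) ‖y‖ :=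
          (hA.mul hB).const_mul c
        have hWev : ∀ᶠ s in nhds ‖y‖, HasDerivAt W (W1 s) s := by
          filter_upwards [isOpen_Ioo.eventually_mem hrI] with s hs using hWd s hs
        have huev : ∀ᶠ z in nhds y, uβ z = W ‖z‖ := by
          filter_upwards [Metric.isOpen_ball.eventually_mem hy] with z hz using huW z hz
        have hlap := lap_radial hy0 huev hWev hW2
        rw [hlap]
        have huy : uβ y = c * U₀ (‖y‖^κ) := huW y hy
        rw [huy]
        have hODEs := hODE (‖y‖^κ) hsI
        have E6 : c ^ (p-1) = κ * κ := by
          rw [hcdef, ← Real.rpow_mul hκ0.le, div_mul_cancel₀ 2 hp1,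
            show (2:ℝ) = ((2:ℕ):ℝ) by norm_num, Real.rpow_natCast]
          ring
        have E7 : |c * U₀ (‖y‖^κ)| ^ (p-1) = (κ*κ) * |U₀ (‖y‖^κ)|^(p-1) := by
          rw [abs_mul, abs_of_pos hc0, Real.mul_rpow hc0.le (abs_nonneg _), E6]
        rw [E7]
        have P1 : ‖y‖ ^ (κ - 1) = ‖y‖ ^ κ / ‖y‖ := by
          rw [Real.rpow_sub hy0', Real.rpow_one]
        have P2 : ‖y‖ ^ (κ-1-1) = ‖y‖ ^ κ / ‖y‖ / ‖y‖ := by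
          rw [Real.rpow_sub hy0', Real.rpow_sub hy0', Real.rpow_one]
        have P3 : (‖y‖^κ)^α * (‖y‖^κ * ‖y‖^κ) = ‖y‖^β * ‖y‖ * ‖y‖ := by
          have h1 : (‖y‖^κ)^α = ‖y‖^(κ*α) := (Real.rpow_mul hy0'.le κ α).symm
          calc (‖y‖^κ)^α * (‖y‖^κ * ‖y‖^κ) = ‖y‖^(κ*α) * ‖y‖^(κ + κ) := by
                rw [h1, ← Real.rpow_add hy0']
            _ = ‖y‖^(κ*α + (κ + κ)) := by rw [← Real.rpow_add hy0']
            _ = ‖y‖^(β + 1 + 1) := by congr 1; linear_combination hκβ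
            _ = ‖y‖^β * ‖y‖ * ‖y‖ := by
                rw [Real.rpow_add hy0', Real.rpow_add hy0', Real.rpow_one]
        have h5 : U2 (‖y‖^κ) = -((‖y‖^κ)^α * |U₀ (‖y‖^κ)|^(p-1) * U₀ (‖y‖^κ))
            - U1 (‖y‖^κ) / (‖y‖^κ) := by
          have := hODEs; linarith
        have hWr : W1 ‖y‖ = c * (U1 (‖y‖^κ) * (κ * ‖y‖ ^ (κ-1))) := rfl
        rw [hWr, h5, P1, P2]
        have hs0 : (0:ℝ) < ‖y‖^κ := hsI.1
        field_simp
        linear_combination (κ * (|U₀ (‖y‖^κ)|^(p-1) * U₀ (‖y‖^κ))) * P3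

    · -- boundary condition
      intro y hy1
      rw [huβ' y, hy1, Real.one_rpow, one_smul, hbd y hy1, mul_zero]
    · -- nodal count
      have hSeq : {z : E2 | z ∈ Metric.ball 0 1 ∧ uβ z ≠ 0}
          = ⇑(TkHomeo κ hκ0) ⁻¹' {z : E2 | z ∈ Metric.ball 0 1 ∧ uα z ≠ 0} := by
        ext z
        have hez : (TkHomeo κ hκ0) z = (‖z‖ ^ (κ - 1) : ℝ) • z := rfl
        simp only [Set.mem_setOf_eq, Set.mem_preimage, hez]
        constructor
        · rintro ⟨h1, h2⟩
          refine ⟨?_, ?_⟩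
          · rw [mem_ball_zero_iff, norm_Tk κ hκ0]
            exact Real.rpow_lt_one (norm_nonneg z) (mem_ball_zero_iff.1 h1) hκ0
          · intro h
            exact h2 (by rw [huβ' z, h, mul_zero])
        · rintro ⟨h1, h2⟩
          refine ⟨?_, ?_⟩
          · rw [mem_ball_zero_iff]
            by_contra h
            push_neg at h
            have := Real.one_le_rpow h hκ0.le
            rw [← norm_Tk κ hκ0 z] at this
            rw [mem_ball_zero_iff] at h1
            linarith
          · rw [huβ' z]
            exact mul_ne_zero hc0.ne' h2
      exact ncard_components _ _ (TkHomeo κ hκ0) hSeq
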